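/- If G is a finite uniformly generated group and N is a normal subgroup of G, then both N and G/N are uniformly generated. -/

import Mathlib

/-- A chain `⊥ = c 0 < c 1 < ⋯ < c n = ⊤` of subgroups is *unrefinable* if each
`c i` is maximal in `c (i+1)` (i.e. consecutive terms form a covering pair). -/
def IsUnrefinableChain {G : Type*} [Group G] {n : ℕ} (c : Fin (n + 1) → Subgroup G) : Prop :=
  c 0 = ⊥ ∧ c (Fin.last n) = ⊤ ∧ ∀ i : Fin n, c i.castSucc ⋖ c i.succ

/-- The length `ℓ(G)`: the maximal length of an unrefinable chain of subgroups. -/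
noncomputable def groupLength (G : Type*) [Group G] : ℕ :=
  sSup {n | ∃ c : Fin (n + 1) → Subgroup G, IsUnrefinableChain c}

/-- The depth `λ(G)`: the minimal length of an unrefinable chain of subgroups. -/
noncomputable def groupDepth (G : Type*) [Group G] : ℕ :=
  sInf {n | ∃ c : Fin (n + 1) → Subgroup G, IsUnrefinableChain c}

/-- `d(G)`: the minimal number of generators of `G`. -/
noncomputable def minGen (G : Type*) [Group G] : ℕ :=
  sInf {n | ∃ S : Finset G, S.card = n ∧ Subgroup.closure (S : Set G) = ⊤}

/-- `m(G)`: the maximal size of an independent generating set of `G`. -/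
noncomputable def maxIndep (G : Type*) [Group G] : ℕ :=
  sSup {n | ∃ S : Finset G, S.card = n ∧ Subgroup.closure (S : Set G) = ⊤ ∧
    ∀ a ∈ S, Subgroup.closure ((S : Set G) \ {a}) < ⊤}

/-- Given a tuple `x : Fin d → G`, the chain of subgroups
`⟨⟩ ≤ ⟨x 0⟩ ≤ ⟨x 0, x 1⟩ ≤ ⋯ ≤ ⟨x 0, …, x (d-1)⟩`. -/
def partialClosure {G : Type*} [Group G] {d : ℕ} (x : Fin d → G) (i : Fin (d + 1)) :
    Subgroup G :=
  Subgroup.closure (x '' {j | (j : ℕ) < (i : ℕ)})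

/-- `G` is *`d`-uniformly generated* if strictly ascending chains
`1 < ⟨x 1⟩ < ⋯ < ⟨x 1, …, x d⟩` exist, and every such chain ends at `G`. -/
def DUnifGen (G : Type*) [Group G] (d : ℕ) : Prop :=
  (∃ x : Fin d → G, StrictMono (partialClosure x)) ∧
  ∀ x : Fin d → G, StrictMono (partialClosure x) → Subgroup.closure (Set.range x) = ⊤

/-- `G` is *uniformly generated* if it is `d(G)`-uniformly generated. -/
def UniformlyGenerated (G : Type*) [Group G] : Prop :=
  DUnifGen G (minGen G)

/-- `G` is elementary abelian: isomorphic to `(C_p)^k` for some prime `p`. -/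
def IsElementaryAbelian (G : Type*) [Group G] : Prop :=
  ∃ (p k : ℕ), p.Prime ∧ Nonempty (G ≃* (Fin k → Multiplicative (ZMod p)))

/-- `G` is supersolvable: it has a normal series (all terms normal in `G`)
with cyclic factors (each step is obtained by adjoining a single element). -/
def IsSupersolvableGroup (G : Type*) [Group G] : Prop :=
  ∃ (n : ℕ) (c : Fin (n + 1) → Subgroup G),
    c 0 = ⊥ ∧ c (Fin.last n) = ⊤ ∧ Monotone c ∧ (∀ i, (c i).Normal) ∧
    ∀ i : Fin n, ∃ g : G, c i.succ = c i.castSucc ⊔ Subgroup.zpowers g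

/-- `G` is isomorphic to `(C_p)^{k} ⋊ C_q` where `C_q` acts by a nontrivial scalar:
expressed internally via a normal elementary abelian `p`-subgroup `N`, an element `g`
of order `q` complementing it, whose conjugation action raises every element of `N`
to a fixed power `c` which is a nontrivial scalar of multiplicative order `q` mod `p`. -/
def IsScalarExtension (G : Type*) [Group G] : Prop :=
  ∃ (p q : ℕ), p.Prime ∧ q.Prime ∧
    ∃ (N : Subgroup G) (g : G) (c : ℕ),
      N.Normal ∧ (∀ a ∈ N, ∀ b ∈ N, a * b = b * a) ∧ (∀ a ∈ N, a ^ p = 1) ∧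
      orderOf g = q ∧
      N ⊔ Subgroup.zpowers g = ⊤ ∧ N ⊓ Subgroup.zpowers g = ⊥ ∧
      (∀ n ∈ N, g * n * g⁻¹ = n ^ c) ∧
      c % p ≠ 1 % p ∧ c ^ q % p = 1 % p


/-!
For a finite group `H`, every unrefinable chain of subgroups has length at least `d(H)`, since
each covering step is obtained by adjoining a single element; and `H` is uniformly generated
exactly when every unrefinable chain has length `d(H)`. Unrefinable chains of `N` and of `G ⧸ N`
splice into an unrefinable chain of `G` whose length is the sum of theirs, and
`d(G) ≤ d(N) + d(G ⧸ N)`. So if all unrefinable chains of `G` have length `d(G)`, all chains of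
`N` have a common length `a`, all chains of `G ⧸ N` a common length `b`, and
`a + b = d(G) ≤ d(N) + d(G ⧸ N) ≤ a + b` forces `d(N) = a` and `d(G ⧸ N) = b`.
-/

open Subgroup

section Chains

variable {H : Type*} [Group H]

theorem partialClosure_zero {d : ℕ} (x : Fin d → H) : partialClosure x 0 = ⊥ := by
  simp [partialClosure]

theorem partialClosure_succ {d : ℕ} (x : Fin d → H) (i : Fin d) :
    partialClosure x i.succ = partialClosure x i.castSucc ⊔ zpowers (x i) := by
  have h : {j : Fin d | (j : ℕ) < (i.succ : ℕ)} =
      {j : Fin d | (j : ℕ) < (i.castSucc : ℕ)} ∪ {i} := by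
    ext j
    simp only [Set.mem_ofPred_eq, Set.mem_union, Set.mem_singleton_iff, Fin.val_succ,
      Fin.val_castSucc, Fin.ext_iff]
    omega
  rw [partialClosure, partialClosure, h, Set.image_union, Set.image_singleton,
    Subgroup.closure_union, zpowers_eq_closure]

theorem partialClosure_last {d : ℕ} (x : Fin d → H) :
    partialClosure x (Fin.last d) = closure (Set.range x) := by
  simp [partialClosure, Fin.is_lt]

theorem partialClosure_comp_castLE {d n : ℕ} (x : Fin n → H) (h : d ≤ n) (i : Fin (d + 1)) :
    partialClosure (x ∘ Fin.castLE h) i =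
      partialClosure x (Fin.castLE (Nat.succ_le_succ h) i) := by
  have hcast : Fin.castLE h '' {j : Fin d | (j : ℕ) < (i : ℕ)} =
      {j : Fin n | (j : ℕ) < (i : ℕ)} := by
    ext j
    exact ⟨fun ⟨k, hk, hkj⟩ => hkj ▸ hk,
      fun hj => ⟨⟨j, Nat.lt_of_lt_of_le hj (Nat.lt_succ_iff.mp i.is_lt)⟩, hj, rfl⟩⟩
  rw [partialClosure, Set.image_comp, hcast]
  rfl

theorem exists_partialClosure_eq {n : ℕ} {c : Fin (n + 1) → Subgroup H} (h₀ : c 0 = ⊥)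
    (hc : ∀ i : Fin n, c i.castSucc ⋖ c i.succ) :
    ∃ x : Fin n → H, partialClosure x = c := by
  have hstep : ∀ i : Fin n, ∃ g : H, c i.succ = c i.castSucc ⊔ zpowers g := by
    intro i
    obtain ⟨g, hg, hgi⟩ := SetLike.exists_of_lt (hc i).lt
    refine ⟨g, (((hc i).eq_or_eq le_sup_left ?_).resolve_left fun he => hgi ?_).symm⟩
    · exact sup_le (hc i).le (zpowers_le.2 hg)
    · exact he ▸ mem_sup_right (mem_zpowers g)
  choose x hx using hstep
  refine ⟨x, funext fun i => ?_⟩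
  induction i using Fin.induction with
  | zero => rw [partialClosure_zero, h₀]
  | succ i ih => rw [partialClosure_succ, ih, hx]

theorem minGen_le_of_closure_range_eq_top {n : ℕ} (x : Fin n → H)
    (hx : closure (Set.range x) = ⊤) : minGen H ≤ n := by
  classical
  calc minGen H ≤ (Finset.univ.image x).card := Nat.sInf_le ⟨_, rfl, by simpa using hx⟩
    _ ≤ n := Finset.card_image_le.trans_eq (by simp)

theorem exists_finset_card_eq_minGen (H : Type*) [Group H] [Finite H] :
    ∃ S : Finset H, S.card = minGen H ∧ closure (S : Set H) = ⊤ :=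
  Nat.sInf_mem (s := {n | ∃ S : Finset H, S.card = n ∧ closure (S : Set H) = ⊤})
    ⟨_, (Set.toFinite Set.univ).toFinset, rfl, by simp⟩

namespace IsUnrefinableChain

variable {n : ℕ} {c : Fin (n + 1) → Subgroup H}

theorem strictMono (hc : IsUnrefinableChain c) : StrictMono c :=
  Fin.strictMono_iff_lt_succ.2 fun i => (hc.2.2 i).lt

theorem minGen_le (hc : IsUnrefinableChain c) : minGen H ≤ n := by
  obtain ⟨x, hx⟩ := exists_partialClosure_eq hc.1 hc.2.2
  exact minGen_le_of_closure_range_eq_top x (by rw [← partialClosure_last, hx, hc.2.1])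

end IsUnrefinableChain

theorem LTSeries.exists_isUnrefinableChain_length_ge [Finite H] (s : LTSeries (Subgroup H)) :
    ∃ (n : ℕ) (c : Fin (n + 1) → Subgroup H), IsUnrefinableChain c ∧ s.length ≤ n := by
  obtain ⟨t, i, -, h₀, h₁⟩ := s.exists_relSeries_covBy_and_head_eq_bot_and_last_eq_bot
  exact ⟨t.length, t, ⟨h₀, h₁, t.step⟩, by simpa using Fintype.card_le_of_embedding i⟩

theorem exists_isUnrefinableChain (H : Type*) [Group H] [Finite H] :
    ∃ (n : ℕ) (c : Fin (n + 1) → Subgroup H), IsUnrefinableChain c :=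
  let ⟨n, c, hc, _⟩ := LTSeries.exists_isUnrefinableChain_length_ge (RelSeries.singleton _ ⊥)
  ⟨n, c, hc⟩

/-- The first `d` generators read off an unrefinable chain longer than `d` would already
generate `H`, although the chain has not reached `⊤` at step `d`. -/
theorem DUnifGen.length_le {d n : ℕ} (hU : DUnifGen H d) {c : Fin (n + 1) → Subgroup H}
    (hc : IsUnrefinableChain c) : n ≤ d := by
  by_contra! hdn
  obtain ⟨x, hx⟩ := exists_partialClosure_eq hc.1 hc.2.2
  have hpc := partialClosure_comp_castLE x hdn.le
  have hmono : StrictMono (partialClosure (x ∘ Fin.castLE hdn.le)) := fun i j hij => by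
    rw [hpc, hpc, hx]
    exact hc.strictMono (Fin.strictMono_castLE _ hij)
  have htop := hU.2 _ hmono
  rw [← partialClosure_last, hpc, hx] at htop
  exact (hc.strictMono (show Fin.castLE _ (Fin.last d) < Fin.last n from hdn)).ne
    (htop.trans hc.2.1.symm)

theorem dUnifGen_of_forall_length_eq [Finite H] {d : ℕ}
    (h : ∀ (n : ℕ) (c : Fin (n + 1) → Subgroup H), IsUnrefinableChain c → n = d) :
    DUnifGen H d := by
  obtain ⟨n, c, hc⟩ := exists_isUnrefinableChain H
  obtain rfl := h n c hc
  refine ⟨?_, fun x hx => ?_⟩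
  · obtain ⟨x, hx⟩ := exists_partialClosure_eq hc.1 hc.2.2
    exact ⟨x, hx ▸ hc.strictMono⟩
  · by_contra hne
    have hlast : partialClosure x (Fin.last n) < ⊤ := by
      rw [partialClosure_last]
      exact lt_top_iff_ne_top.2 hne
    obtain ⟨m, c', hc', hm⟩ :=
      LTSeries.exists_isUnrefinableChain_length_ge ((LTSeries.mk n _ hx).snoc ⊤ hlast)
    have := h m c' hc'
    change n + 1 ≤ m at hm
    omega

end Chains

section Extension

variable {G : Type*} [Group G]

theorem Subgroup.map_subtype_covBy_map_subtype {N : Subgroup G} {A B : Subgroup N}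
    (h : A ⋖ B) : A.map N.subtype ⋖ B.map N.subtype :=
  ((apply_covBy_apply_iff (MapSubtype.orderIso N)).2 h).image (OrderEmbedding.subtype _)
    (Subtype.range_coe_subtype (p := (· ≤ N)) ▸ Set.ordConnected_Iic)

theorem Subgroup.comap_mk'_covBy_comap_mk' {N : Subgroup G} [N.Normal]
    {A B : Subgroup (G ⧸ N)} (h : A ⋖ B) :
    A.comap (QuotientGroup.mk' N) ⋖ B.comap (QuotientGroup.mk' N) :=
  ((apply_covBy_apply_iff (QuotientGroup.comapMk'OrderIso N)).2 h).image
    (OrderEmbedding.subtype _)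
    (Subtype.range_coe_subtype (p := (N ≤ ·)) ▸ Set.ordConnected_Ici)

theorem IsUnrefinableChain.exists_append_quotient {N : Subgroup G} [N.Normal] {a b : ℕ}
    {c₁ : Fin (a + 1) → Subgroup N} (h₁ : IsUnrefinableChain c₁)
    {c₂ : Fin (b + 1) → Subgroup (G ⧸ N)} (h₂ : IsUnrefinableChain c₂) :
    ∃ c : Fin (a + b + 1) → Subgroup G, IsUnrefinableChain c := by
  let p : RelSeries {(A, B) : Subgroup G × Subgroup G | A ⋖ B} :=
    ⟨a, fun i => (c₁ i).map N.subtype, fun i => map_subtype_covBy_map_subtype (h₁.2.2 i)⟩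
  let q : RelSeries {(A, B) : Subgroup G × Subgroup G | A ⋖ B} :=
    ⟨b, fun i => (c₂ i).comap (QuotientGroup.mk' N),
      fun i => comap_mk'_covBy_comap_mk' (h₂.2.2 i)⟩
  have hpq : p.last = q.head := by
    change (c₁ (Fin.last a)).map N.subtype = (c₂ 0).comap (QuotientGroup.mk' N)
    rw [h₁.2.1, h₂.1, ← MonoidHom.range_eq_map, range_subtype, MonoidHom.comap_bot,
      QuotientGroup.ker_mk']
  refine ⟨p.smash q hpq, ?_, ?_, (p.smash q hpq).step⟩
  · change (p.smash q hpq).head = ⊥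
    rw [RelSeries.head_smash]
    exact (congrArg _ h₁.1).trans (Subgroup.map_bot _)
  · change (p.smash q hpq).last = ⊤
    rw [RelSeries.last_smash]
    exact (congrArg _ h₂.2.1).trans (comap_top _)

theorem minGen_le_minGen_add_minGen_quotient [Finite G] (N : Subgroup G) [N.Normal] :
    minGen G ≤ minGen N + minGen (G ⧸ N) := by
  classical
  obtain ⟨SN, hSN, hgenN⟩ := exists_finset_card_eq_minGen N
  obtain ⟨SQ, hSQ, hgenQ⟩ := exists_finset_card_eq_minGen (G ⧸ N)
  set U := SN.image N.subtype ∪ SQ.image Quotient.out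
  have hN : N ≤ closure (U : Set G) := by
    rw [← range_subtype N, MonoidHom.range_eq_map, ← hgenN, MonoidHom.map_closure]
    exact closure_mono (by simp [U])
  have hQ : (closure (U : Set G)).map (QuotientGroup.mk' N) = ⊤ := by
    rw [MonoidHom.map_closure, eq_top_iff, ← hgenQ]
    exact closure_mono fun t ht =>
      ⟨t.out, Finset.mem_union_right _ (Finset.mem_image_of_mem _ ht), QuotientGroup.out_eq' t⟩
  have hU : closure (U : Set G) = ⊤ := by
    have := comap_map_eq (QuotientGroup.mk' N) (closure (U : Set G))
    rwa [hQ, comap_top, QuotientGroup.ker_mk', sup_eq_left.2 hN, eq_comm] at this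
  calc minGen G ≤ U.card := Nat.sInf_le ⟨U, rfl, hU⟩
    _ ≤ (SN.image N.subtype).card + (SQ.image Quotient.out).card := Finset.card_union_le _ _
    _ ≤ minGen N + minGen (G ⧸ N) :=
      hSN ▸ hSQ ▸ Nat.add_le_add Finset.card_image_le Finset.card_image_le

end Extension

/-- normal subgroups and quotients of a finite uniformly generated
group are uniformly generated. -/
theorem uniformlyGenerated_of_normal (G : Type*) [Group G] [Finite G]
    (hG : UniformlyGenerated G) (N : Subgroup G) [N.Normal] :
    UniformlyGenerated N ∧ UniformlyGenerated (G ⧸ N) := by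
  have hlen : ∀ {a b : ℕ} {c₁ : Fin (a + 1) → Subgroup N}
      {c₂ : Fin (b + 1) → Subgroup (G ⧸ N)},
      IsUnrefinableChain c₁ → IsUnrefinableChain c₂ → a + b = minGen G := by
    intro a b c₁ c₂ h₁ h₂
    obtain ⟨c, hc⟩ := h₁.exists_append_quotient h₂
    exact le_antisymm (DUnifGen.length_le hG hc) hc.minGen_le
  obtain ⟨a, c₁, h₁⟩ := exists_isUnrefinableChain N
  obtain ⟨b, c₂, h₂⟩ := exists_isUnrefinableChain (G ⧸ N)
  have hsum := hlen h₁ h₂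
  have hN := h₁.minGen_le
  have hQ := h₂.minGen_le
  have hd := minGen_le_minGen_add_minGen_quotient N
  exact ⟨dUnifGen_of_forall_length_eq fun n _ hc => by have := hlen hc h₂; omega,
    dUnifGen_of_forall_length_eq fun n _ hc => by have := hlen h₁ hc; omega⟩
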